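/- arXiv:1205.2925 — 8 statements merged into one kernel-verified Lean document; each statement's English description precedes it below -/
import Mathlib

section
/- Let f : Y → X be a surjective map between metric spaces that restricts to a bijection from every ε-ball in Y onto an ε-ball in X. Then every ε-chain α = {x₀,...,xₙ} in X lifts uniquely: for each ỹ₀ ∈ f⁻¹(x₀) there is exactly one ε-chain {ỹ₀,...,ỹₙ} in Y with f(ỹ_i) = x_i for all i. -/
open Metric

variable {X : Type*} [MetricSpace X]

/-- `c` is an `ε`-chain: a nonempty finite sequence with consecutive distances `< ε`. -/
def IsEChain (ε : ℝ) (c : List X) : Prop :=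
  c ≠ [] ∧ c.Chain' (fun a b => dist a b < ε)

/-- A basic move: addition or removal of a single point, keeping endpoints fixed,
with both chains `ε`-chains. -/
def EStep (ε : ℝ) (c₁ c₂ : List X) : Prop :=
  IsEChain ε c₁ ∧ IsEChain ε c₂ ∧
  ∃ (pre post : List X) (a : X), pre ≠ [] ∧ post ≠ [] ∧
    ((c₁ = pre ++ post ∧ c₂ = pre ++ a :: post) ∨
     (c₁ = pre ++ a :: post ∧ c₂ = pre ++ post))

/-- `ε`-homotopy: a finite sequence of basic moves. -/
def EHomotopic (ε : ℝ) : List X → List X → Prop :=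
  Relation.ReflTransGen (EStep ε)

/-- An `ε`-loop is `ε`-null if it is `ε`-homotopic to the trivial chain at its initial point. -/
def ENull (ε : ℝ) (c : List X) : Prop :=
  ∃ x, c.head? = some x ∧ EHomotopic ε c [x, x]

/-- The length of a chain: the sum of consecutive distances. -/
def chainLength : List X → ℝ
  | [] => 0
  | [_] => 0
  | a :: b :: rest => dist a b + chainLength (b :: rest)

/-- The length of the `ε`-homotopy class of a chain. -/
noncomputable def classLength (ε : ℝ) (c : List X) : ℝ :=
  sInf {r | ∃ c', EHomotopic ε c c' ∧ chainLength c' = r}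

/-- The `ε`-intrinsic "metric" induced by `d`. -/
noncomputable def Deps (ε : ℝ) (x y : X) : ℝ :=
  sInf {r | ∃ c : List X, IsEChain ε c ∧ c.head? = some x ∧ c.getLast? = some y ∧
    chainLength c = r}

/-- A metric space is chain connected if any two points are joined by `ε`-chains
for every `ε > 0`. -/
def ChainConnected (X : Type*) [MetricSpace X] : Prop :=
  ∀ ε > 0, ∀ x y : X, ∃ c : List X, IsEChain ε c ∧ c.head? = some x ∧ c.getLast? = some y

theorem chain_lifting {Y : Type*} [MetricSpace Y] {f : Y → X} {ε : ℝ}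
    (hsurj : Function.Surjective f)
    (hball : ∀ y : Y, Set.BijOn f (ball y ε) (ball (f y) ε))
    {α : List X} (hα : IsEChain ε α) {x₀ : X} (hx : α.head? = some x₀)
    {y₀ : Y} (hy : f y₀ = x₀) :
    ∃! l : List Y, IsEChain ε l ∧ l.head? = some y₀ ∧ l.map f = α := by
  induction α generalizing x₀ y₀ with
  | nil => simp at hx
  | cons a t ih =>
    simp only [List.head?_cons, Option.some.injEq] at hx
    subst hx
    obtain ⟨-, hchain⟩ := hα
    cases t with
    | nil =>
      refine ⟨[y₀], ⟨⟨by simp, List.isChain_singleton _⟩, by simp, by simp [hy]⟩, ?_⟩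
      rintro l ⟨-, hl2, hl3⟩
      cases l with
      | nil => simp at hl3
      | cons y l' =>
        cases l' with
        | nil => simpa using hl2
        | cons z l'' => simp at hl3
    | cons b t' =>
      simp only [List.Chain', List.isChain_cons_cons] at hchain
      obtain ⟨hab, hchain'⟩ := hchain
      have hb : b ∈ ball (f y₀) ε := by
        rw [hy]; simpa [mem_ball, dist_comm] using hab
      obtain ⟨y₁, hy₁ball, hy₁⟩ := (hball y₀).surjOn hb
      obtain ⟨l', ⟨⟨hl'ne, hl'chain⟩, hl'head, hl'map⟩, huniq⟩ :=
        ih ⟨List.cons_ne_nil _ _, hchain'⟩ rfl hy₁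
      refine ⟨y₀ :: l', ⟨⟨List.cons_ne_nil _ _, ?_⟩, rfl, by simp [hy, hl'map]⟩, ?_⟩
      · simp only [List.Chain', List.isChain_cons]
        refine ⟨?_, hl'chain⟩
        intro z hz
        rw [hl'head] at hz
        simp only [Option.mem_def, Option.some.injEq] at hz
        subst hz
        simpa [dist_comm] using hy₁ball
      · rintro l ⟨⟨hlne, hlchain⟩, hlhead, hlmap⟩
        cases l with
        | nil => simp at hlmap
        | cons y l'' =>
          simp only [List.head?_cons, Option.some.injEq] at hlhead
          obtain rfl : y₀ = y := hlhead.symm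
          simp only [List.map_cons, List.cons.injEq] at hlmap
          obtain ⟨hfy, hmap''⟩ := hlmap
          cases l'' with
          | nil => simp at hmap''
          | cons z r =>
            simp only [List.Chain', List.isChain_cons_cons] at hlchain
            obtain ⟨hyz, hchain''⟩ := hlchain
            simp only [List.map_cons, List.cons.injEq] at hmap''
            have hz : f z = b := hmap''.1
            have hzball : z ∈ ball y₀ ε := by
              simpa [mem_ball, dist_comm] using hyz
            have hzy₁ : z = y₁ := (hball y₀).injOn hzball hy₁ball (by rw [hz, hy₁])
            subst hzy₁
            have hr := huniq (z :: r) ⟨⟨List.cons_ne_nil _ _, hchain''⟩, rfl,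
              by simp [hz, hmap''.2]⟩
            rw [hr]
end

section
/- Let f : Y → X be a surjective map between metric spaces that is a bijection from ε-balls in Y onto ε-balls in X, with the additional property that the lift of any ε-triangle in X is an ε-triangle in Y. If α and β are ε-homotopic ε-chains in X beginning at x₀, then their lifts to any point ỹ₀ ∈ f⁻¹(x₀) end at the same point and are ε-homotopic in Y. -/
open Metric

variable {X : Type*} [MetricSpace X]

section LiftingLemmas

variable {Y : Type*} [MetricSpace Y] {f : Y → X} {ε : ℝ}

private lemma lift_exists (hball : ∀ y : Y, Set.BijOn f (ball y ε) (ball (f y) ε))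
    (c : List X) : ∀ (y : Y), c.Chain' (fun a b => dist a b < ε) → c.head? = some (f y) →
      ∃ l : List Y, l.Chain' (fun a b => dist a b < ε) ∧ l.head? = some y ∧ l.map f = c := by
  induction c with
  | nil => intro y _ h; simp at h
  | cons x rest ih =>
    intro y hc hh
    have hx : x = f y := by simpa using hh
    cases rest with
    | nil => exact ⟨[y], List.isChain_singleton _, rfl, by simp [hx]⟩
    | cons x' rest' =>
      have hd : dist x x' < ε := (List.isChain_cons_cons.mp hc).1
      have hx' : x' ∈ ball (f y) ε := by
        rw [mem_ball, dist_comm, ← hx]; exact hd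
      obtain ⟨y', hy'mem, hfy'⟩ := (hball y).surjOn hx'
      obtain ⟨l', hl'c, hl'h, hl'm⟩ := ih y' (List.isChain_cons_cons.mp hc).2 (by simp [hfy'])
      refine ⟨y :: l', ?_, rfl, by simp [hx, hl'm]⟩
      refine List.isChain_cons.mpr ⟨?_, hl'c⟩
      intro z hz
      rw [hl'h, Option.mem_def, Option.some.injEq] at hz
      subst hz
      rw [dist_comm, ← mem_ball]; exact hy'mem

private lemma lift_unique (hball : ∀ y : Y, Set.BijOn f (ball y ε) (ball (f y) ε))
    (l : List Y) : ∀ (l' : List Y), l.Chain' (fun a b => dist a b < ε) →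
      l'.Chain' (fun a b => dist a b < ε) → l.map f = l'.map f → l.head? = l'.head? →
      l = l' := by
  induction l with
  | nil =>
    intro l' _ _ hm _
    exact (List.map_eq_nil_iff.mp hm.symm).symm
  | cons y t ih =>
    intro l' hc hc' hm hh
    cases l' with
    | nil => simp at hm
    | cons y' t' =>
      have hy : y = y' := by simpa using hh
      subst hy
      have hmt : t.map f = t'.map f := by simpa using hm
      have hht : t.head? = t'.head? := by
        cases t with
        | nil =>
          have : t' = [] := by simpa using hmt.symm
          simp [this]
        | cons b s =>
          cases t' with
          | nil => simp at hmt
          | cons b' s' =>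
            have hfb : f b = f b' := (by simpa using hmt : _ ∧ _).1
            have h1 : dist y b < ε := (List.isChain_cons_cons.mp hc).1
            have h2 : dist y b' < ε := (List.isChain_cons_cons.mp hc').1
            have : b = b' := (hball y).injOn (mem_ball'.mpr h1) (mem_ball'.mpr h2) hfb
            simp [this]
      have := ih t' (List.isChain_cons.mp hc).2 (List.isChain_cons.mp hc').2 hmt hht
      rw [this]

private lemma step_insert (hball : ∀ y : Y, Set.BijOn f (ball y ε) (ball (f y) ε))
    (htri : ∀ (x y z : X) (l : List Y), IsEChain ε [x, y, z, x] → IsEChain ε l →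
      l.map f = [x, y, z, x] → l.head? = l.getLast?)
    {pre post : List X} {a : X} (hpre : pre ≠ []) (hpost : post ≠ [])
    (hc₁ : IsEChain ε (pre ++ post)) (hc₂ : IsEChain ε (pre ++ a :: post))
    {l₁ l₂ : List Y} (h1 : l₁.Chain' (fun a b => dist a b < ε))
    (h2 : l₂.Chain' (fun a b => dist a b < ε))
    (hm1 : l₁.map f = pre ++ post) (hm2 : l₂.map f = pre ++ a :: post)
    (hh : l₁.head? = l₂.head?) :
    ∃ (s t : List Y) (a' : Y), s ≠ [] ∧ t ≠ [] ∧ l₁ = s ++ t ∧ l₂ = s ++ a' :: t := by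
  obtain ⟨s₁, t₁, rfl, hs₁, ht₁⟩ := List.map_eq_append_iff.mp hm1
  obtain ⟨s₂, t₂', rfl, hs₂, ht₂'⟩ := List.map_eq_append_iff.mp hm2
  obtain ⟨a', t₂, rfl, hfa, ht₂⟩ := List.map_eq_cons_iff.mp ht₂'
  have hs₁ne : s₁ ≠ [] := fun h => hpre (by simpa [h] using hs₁.symm)
  have hs₂ne : s₂ ≠ [] := fun h => hpre (by simpa [h] using hs₂.symm)
  have ht₁ne : t₁ ≠ [] := fun h => hpost (by simpa [h] using ht₁.symm)
  have ht₂ne : t₂ ≠ [] := fun h => hpost (by simpa [h] using ht₂.symm)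
  -- the prefixes agree
  have hss : s₂ = s₁ := by
    refine lift_unique hball s₂ s₁ h2.left_of_append h1.left_of_append
      (hs₂.trans hs₁.symm) ?_
    rw [← List.head?_append_of_ne_nil _ hs₂ne, ← List.head?_append_of_ne_nil _ hs₁ne, hh]
  subst hss
  -- name the key points
  obtain ⟨q, t₁r, rfl⟩ := List.exists_cons_of_ne_nil ht₁ne
  obtain ⟨q', t₂r, rfl⟩ := List.exists_cons_of_ne_nil ht₂ne
  set p := s₂.getLast hs₂ne with hp
  have hplast : s₂.getLast? = some p := List.getLast?_eq_getLast hs₂ne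
  have hpq : dist p q < ε := by
    have := (List.isChain_append.mp h1).2.2
    exact this p hplast q rfl
  have hpa : dist p a' < ε := by
    have := (List.isChain_append.mp h2).2.2
    exact this p hplast a' rfl
  have haq' : dist a' q' < ε := by
    have := (List.isChain_append.mp h2).2.1
    exact (List.isChain_cons_cons.mp this).1
  -- facts in X
  have hfpu : pre.getLast? = some (f p) := by
    rw [← hs₂, List.getLast?_map, hplast]; rfl
  have hfq : post.head? = some (f q) := by rw [← ht₁]; rfl
  have hfq' : post.head? = some (f q') := by rw [← ht₂]; rfl
  have hfqq : f q = f q' := by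
    rw [hfq] at hfq'; exact (Option.some_injective _ hfq')
  have hua : dist (f p) a < ε := by
    have := (List.isChain_append.mp hc₂.2).2.2
    exact this (f p) hfpu a rfl
  have hav : dist a (f q') < ε := by
    have h := (List.isChain_append.mp hc₂.2).2.1
    have := (List.isChain_cons.mp h).1
    exact this (f q') hfq'
  have huv : dist (f p) (f q') < ε := by
    have := (List.isChain_append.mp hc₁.2).2.2
    have h := this (f p) hfpu (f q) hfq
    rwa [hfqq] at h
  -- find the closing point of the triangle lift
  have hmem : f p ∈ ball (f q') ε := by rw [mem_ball]; exact huv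
  obtain ⟨p', hp'mem, hfp'⟩ := (hball q').surjOn hmem
  have htri1 : IsEChain ε [f p, a, f q', f p] := by
    refine ⟨by simp, ?_⟩
    simp only [List.Chain', List.isChain_cons_cons, List.isChain_singleton, and_true]
    exact ⟨hua, hav, by rwa [dist_comm]⟩
  have htri2 : IsEChain ε [p, a', q', p'] := by
    refine ⟨by simp, ?_⟩
    simp only [List.Chain', List.isChain_cons_cons, List.isChain_singleton, and_true]
    refine ⟨hpa, haq', ?_⟩
    rw [dist_comm, ← mem_ball]; exact hp'mem
  have hpp' : p = p' := by
    have := htri (f p) a (f q') [p, a', q', p'] htri1 htri2 (by simp [hfa, hfp'])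
    simpa using this
  have hq'p : dist q' p < ε := by
    rw [hpp', dist_comm, ← mem_ball]; exact hp'mem
  have hqq' : q = q' := by
    refine (hball p).injOn (mem_ball'.mpr hpq) ?_ hfqq
    rw [mem_ball]; exact hq'p
  subst hqq'
  -- the suffixes agree
  have htt : q :: t₁r = q :: t₂r := by
    refine lift_unique hball _ _ h1.right_of_append
      ((List.isChain_cons_cons.mp (List.isChain_append.mp h2).2.1).2)
      (ht₁.trans ht₂.symm) rfl
  rw [htt]
  exact ⟨s₂, q :: t₂r, a', hs₂ne, by simp, rfl, rfl⟩

private lemma EStep.head?_eq {c₁ c₂ : List X} (h : EStep ε c₁ c₂) : c₁.head? = c₂.head? := by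
  obtain ⟨-, -, pre, post, a, hpre, -, (⟨rfl, rfl⟩ | ⟨rfl, rfl⟩)⟩ := h <;>
    rw [List.head?_append_of_ne_nil _ hpre, List.head?_append_of_ne_nil _ hpre]

private lemma step_lift (hball : ∀ y : Y, Set.BijOn f (ball y ε) (ball (f y) ε))
    (htri : ∀ (x y z : X) (l : List Y), IsEChain ε [x, y, z, x] → IsEChain ε l →
      l.map f = [x, y, z, x] → l.head? = l.getLast?)
    {c₁ c₂ : List X} (h : EStep ε c₁ c₂)
    {l₁ l₂ : List Y} (h1 : l₁.Chain' (fun a b => dist a b < ε))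
    (h2 : l₂.Chain' (fun a b => dist a b < ε))
    (hm1 : l₁.map f = c₁) (hm2 : l₂.map f = c₂)
    (hh : l₁.head? = l₂.head?) :
    EStep ε l₁ l₂ ∧ l₁.getLast? = l₂.getLast? := by
  have hl₁ne : l₁ ≠ [] := by
    intro hn; rw [hn] at hm1; exact h.1.1 hm1.symm
  have hl₂ne : l₂ ≠ [] := by
    intro hn; rw [hn] at hm2; exact h.2.1.1 hm2.symm
  obtain ⟨hec₁, hec₂, pre, post, a, hpre, hpost, hcase⟩ := h
  rcases hcase with ⟨rfl, rfl⟩ | ⟨rfl, rfl⟩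
  · obtain ⟨s, t, a', hs, ht, rfl, rfl⟩ :=
      step_insert hball htri hpre hpost hec₁ hec₂ h1 h2 hm1 hm2 hh
    refine ⟨⟨⟨hl₁ne, h1⟩, ⟨hl₂ne, h2⟩, s, t, a', hs, ht, Or.inl ⟨rfl, rfl⟩⟩, ?_⟩
    obtain ⟨b, r, rfl⟩ := List.exists_cons_of_ne_nil ht
    rw [List.getLast?_append_of_ne_nil _ (by simp : (b :: r) ≠ []),
      List.getLast?_append_of_ne_nil _ (by simp : (a' :: b :: r) ≠ []), List.getLast?_cons_cons]
  · obtain ⟨s, t, a', hs, ht, rfl, rfl⟩ :=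
      step_insert hball htri hpre hpost hec₂ hec₁ h2 h1 hm2 hm1 hh.symm
    refine ⟨⟨⟨hl₁ne, h1⟩, ⟨hl₂ne, h2⟩, s, t, a', hs, ht, Or.inr ⟨rfl, rfl⟩⟩, ?_⟩
    obtain ⟨b, r, rfl⟩ := List.exists_cons_of_ne_nil ht
    rw [List.getLast?_append_of_ne_nil _ (by simp : (b :: r) ≠ []),
      List.getLast?_append_of_ne_nil _ (by simp : (a' :: b :: r) ≠ []), List.getLast?_cons_cons]

end LiftingLemmas

theorem homotopy_lifting {Y : Type*} [MetricSpace Y] {f : Y → X} {ε : ℝ}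
    (hsurj : Function.Surjective f)
    (hball : ∀ y : Y, Set.BijOn f (ball y ε) (ball (f y) ε))
    (htri : ∀ (x y z : X) (l : List Y), IsEChain ε [x, y, z, x] → IsEChain ε l →
      l.map f = [x, y, z, x] → l.head? = l.getLast?)
    {α β : List X} (hαβ : EHomotopic ε α β) {x₀ : X}
    (hα0 : α.head? = some x₀) (hβ0 : β.head? = some x₀)
    {y₀ : Y} (hy : f y₀ = x₀)
    {lα lβ : List Y}
    (hlα : IsEChain ε lα ∧ lα.head? = some y₀ ∧ lα.map f = α)
    (hlβ : IsEChain ε lβ ∧ lβ.head? = some y₀ ∧ lβ.map f = β) :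
    lα.getLast? = lβ.getLast? ∧ EHomotopic ε lα lβ := by
  obtain ⟨⟨hαne, hαc⟩, hlαh, hlαm⟩ := hlα
  obtain ⟨⟨hβne, hβc⟩, hlβh, hlβm⟩ := hlβ
  have main : ∀ {c₂ : List X}, EHomotopic ε α c₂ → ∀ (l₂ : List Y),
      l₂.Chain' (fun a b => dist a b < ε) → l₂.map f = c₂ → l₂.head? = lα.head? →
      lα.getLast? = l₂.getLast? ∧ EHomotopic ε lα l₂ := by
    intro c₂ h
    induction h with
    | refl =>
      intro l₂ hc hm hh
      have := lift_unique hball lα l₂ hαc hc (hlαm.trans hm.symm) hh.symm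
      rw [← this]
      exact ⟨rfl, Relation.ReflTransGen.refl⟩
    | @tail b cc hab hbc ih =>
      intro l₂ hc hm hh
      have hl₂ne : l₂ ≠ [] := by
        intro hn; rw [hn] at hm; exact hbc.2.1.1 hm.symm
      obtain ⟨y, r, rfl⟩ := List.exists_cons_of_ne_nil hl₂ne
      have hbh : b.head? = some (f y) := by
        rw [hbc.head?_eq, ← hm]; rfl
      obtain ⟨lb, hlbc, hlbh, hlbm⟩ := lift_exists hball _ y hbc.1.2 hbh
      have IH := ih lb hlbc hlbm (hlbh.trans hh)
      have hstepY := step_lift hball htri hbc hlbc hc hlbm hm (hlbh.trans rfl)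
      exact ⟨IH.1.trans hstepY.2, IH.2.trans (Relation.ReflTransGen.single hstepY.1)⟩
  exact
    let h := main hαβ lβ hβc hlβm (hlβh.trans hlαh.symm)
    ⟨h.1, h.2⟩
end

section
/- Let X be a metric space and 0 < δ < ε. If there exists a δ-loop γ that is not δ-null but is ε-null, then there is a homotopy critical value in the interval [δ, ε): i.e., some ε* ∈ [δ,ε) such that γ is not ε*-null but is τ-null for every τ > ε*. -/
open Metric

variable {X : Type*} [MetricSpace X]

lemma IsEChain.mono {ε ε' : ℝ} (h : ε ≤ ε') {c : List X} (hc : IsEChain ε c) :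
    IsEChain ε' c :=
  ⟨hc.1, hc.2.imp fun _ _ hab => lt_of_lt_of_le hab h⟩

lemma EStep.mono {ε ε' : ℝ} (h : ε ≤ ε') {c₁ c₂ : List X} (hc : EStep ε c₁ c₂) :
    EStep ε' c₁ c₂ :=
  ⟨hc.1.mono h, hc.2.1.mono h, hc.2.2⟩

lemma EHomotopic.mono {ε ε' : ℝ} (h : ε ≤ ε') {c₁ c₂ : List X}
    (hc : EHomotopic ε c₁ c₂) : EHomotopic ε' c₁ c₂ :=
  by induction hc with
  | refl => exact .refl
  | tail _ hs ih => exact ih.tail (hs.mono h)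

lemma ENull.mono {ε ε' : ℝ} (h : ε ≤ ε') {c : List X} (hc : ENull ε c) : ENull ε' c :=
  ⟨hc.choose, hc.choose_spec.1, hc.choose_spec.2.mono h⟩

lemma chain_open {ε : ℝ} : ∀ l : List X, l.Chain' (fun a b => dist a b < ε) →
    ∃ ε' < ε, l.Chain' (fun a b => dist a b < ε')
  | [] => fun _ => ⟨ε - 1, by linarith, List.isChain_nil⟩
  | [_] => fun _ => ⟨ε - 1, by linarith, by simp [List.Chain']⟩
  | a :: b :: rest => fun h => by
    simp only [List.Chain', List.isChain_cons_cons] at h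
    obtain ⟨ε₁, hε₁, hc₁⟩ := chain_open (b :: rest) h.2
    refine ⟨max ε₁ ((dist a b + ε) / 2), ?_, ?_⟩
    · exact max_lt hε₁ (by linarith [h.1])
    · simp only [List.Chain', List.isChain_cons_cons]
      exact ⟨lt_of_lt_of_le (by linarith [h.1]) (le_max_right _ _),
        hc₁.imp fun _ _ hxy => lt_of_lt_of_le hxy (le_max_left _ _)⟩

lemma IsEChain.open {ε : ℝ} {c : List X} (hc : IsEChain ε c) :
    ∃ ε' < ε, IsEChain ε' c := by
  obtain ⟨ε', hε', h⟩ := chain_open c hc.2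
  exact ⟨ε', hε', hc.1, h⟩

lemma EStep.open {ε : ℝ} {c₁ c₂ : List X} (hc : EStep ε c₁ c₂) :
    ∃ ε' < ε, EStep ε' c₁ c₂ := by
  obtain ⟨ε₁, hε₁, h₁⟩ := hc.1.open
  obtain ⟨ε₂, hε₂, h₂⟩ := hc.2.1.open
  exact ⟨max ε₁ ε₂, max_lt hε₁ hε₂,
    h₁.mono (le_max_left _ _), h₂.mono (le_max_right _ _), hc.2.2⟩

lemma EHomotopic.open {ε : ℝ} {c₁ c₂ : List X} (hc : EHomotopic ε c₁ c₂) :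
    ∃ ε' < ε, EHomotopic ε' c₁ c₂ := by
  induction hc with
  | refl => exact ⟨ε - 1, by linarith, Relation.ReflTransGen.refl⟩
  | tail _ hstep ih =>
    obtain ⟨ε₁, hε₁, h₁⟩ := ih
    obtain ⟨ε₂, hε₂, h₂⟩ := hstep.open
    exact ⟨max ε₁ ε₂, max_lt hε₁ hε₂,
      (h₁.mono (le_max_left _ _)).tail (h₂.mono (le_max_right _ _))⟩

lemma ENull.open {ε : ℝ} {c : List X} (hc : ENull ε c) : ∃ ε' < ε, ENull ε' c := by
  obtain ⟨x, hx, h⟩ := hc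
  obtain ⟨ε', hε', h'⟩ := h.open
  exact ⟨ε', hε', x, hx, h'⟩

theorem homotopy_critical_value_exists {δ ε : ℝ} (hδ : 0 < δ) (hδε : δ < ε)
    {γ : List X} (hchain : IsEChain δ γ) (hloop : γ.head? = γ.getLast?)
    (hnotnull : ¬ ENull δ γ) (hnull : ENull ε γ) :
    ∃ ε' ∈ Set.Ico δ ε, ¬ ENull ε' γ ∧ ∀ τ : ℝ, ε' < τ → ENull τ γ := by
  set S : Set ℝ := {τ | ENull τ γ} with hS
  have hne : S.Nonempty := ⟨ε, hnull⟩
  have hlb : ∀ s ∈ S, δ ≤ s := by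
    intro s hs
    by_contra h
    exact hnotnull (hs.mono (le_of_not_ge h))
  have hbdd : BddBelow S := ⟨δ, hlb⟩
  refine ⟨sInf S, ⟨le_csInf hne hlb, ?_⟩, ?_, ?_⟩
  · obtain ⟨ε', hε', h'⟩ := hnull.open
    exact lt_of_le_of_lt (csInf_le hbdd h') hε'
  · intro h
    obtain ⟨ε'', hε'', h''⟩ := ENull.open h
    exact absurd (csInf_le hbdd h'') (not_le.mpr hε'')
  · intro τ hτ
    obtain ⟨s, hs, hsτ⟩ := exists_lt_of_csInf_lt hne hτ
    exact hs.mono hsτ.le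
end

section
/- Let (X,d) be a connected metric space and ε > 0. The ε-intrinsic metric D_ε(x,y) = inf { L(α) : α is an ε-chain from x to y }, where L is chain length, is a metric on X satisfying d ≤ D_ε; moreover D_ε(x,y) < ε if and only if d(x,y) < ε, and in that case D_ε(x,y) = d(x,y). -/
open Metric

variable {X : Type*} [MetricSpace X]

set_option linter.unusedSectionVars false

lemma chainLength_nonneg : ∀ (c : List X), 0 ≤ chainLength c
  | [] => le_refl 0
  | [_] => le_refl 0
  | _ :: b :: rest => add_nonneg dist_nonneg (chainLength_nonneg (b :: rest))

lemma dist_le_chainLength : ∀ (c : List X) (x y : X), c.head? = some x →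
    c.getLast? = some y → dist x y ≤ chainLength c
  | [], x, y, h, _ => by simp at h
  | [a], x, y, h, h' => by
      simp only [List.head?_cons, Option.some.injEq] at h
      simp only [List.getLast?_singleton, Option.some.injEq] at h'
      subst h; subst h'
      simp [chainLength]
  | a :: b :: rest, x, y, h, h' => by
      simp only [List.head?_cons, Option.some.injEq] at h
      have h2 : (b :: rest).getLast? = some y := by
        rwa [List.getLast?_cons_cons] at h'
      have := dist_le_chainLength (b :: rest) b y rfl h2
      rw [← h]
      calc dist a y ≤ dist a b + dist b y := dist_triangle _ _ _
        _ ≤ dist a b + chainLength (b :: rest) := by linarith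
        _ = chainLength (a :: b :: rest) := rfl

lemma chainLength_append : ∀ (c₁ c₂ : List X) (a b : X), c₁.getLast? = some a →
    c₂.head? = some b → chainLength (c₁ ++ c₂) = chainLength c₁ + dist a b + chainLength c₂
  | [], _, _, _, h, _ => by simp at h
  | [u], c₂, a, b, h, h' => by
      simp only [List.getLast?_singleton, Option.some.injEq] at h
      subst h
      cases c₂ with
      | nil => simp at h'
      | cons v t =>
        simp only [List.head?_cons, Option.some.injEq] at h'
        subst h'
        simp [chainLength]
  | u :: v :: r, c₂, a, b, h, h' => by
      rw [List.getLast?_cons_cons] at h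
      have := chainLength_append (v :: r) c₂ a b h h'
      show dist u v + chainLength ((v :: r) ++ c₂) = (dist u v + chainLength (v :: r)) + dist a b + chainLength c₂
      rw [this]; ring

lemma chainLength_reverse : ∀ (c : List X), chainLength c.reverse = chainLength c
  | [] => rfl
  | [_] => rfl
  | a :: b :: r => by
      have h1 : ((b :: r).reverse).getLast? = some b := by
        rw [List.getLast?_reverse]; rfl
      have := chainLength_append ((b :: r).reverse) [a] b a h1 rfl
      rw [List.reverse_cons, this, chainLength_reverse (b :: r)]
      show chainLength (b :: r) + dist b a + chainLength [a] = dist a b + chainLength (b :: r)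
      simp [chainLength, dist_comm]
      ring

lemma IsEChain.reverse {ε : ℝ} {c : List X} (h : IsEChain ε c) : IsEChain ε c.reverse := by
  refine ⟨by simpa using h.1, ?_⟩
  show List.IsChain _ c.reverse
  rw [List.isChain_reverse]
  exact h.2.imp (fun a b hab => by simpa [Function.flip_def, dist_comm] using hab)

lemma chain_connected [ConnectedSpace X] {ε : ℝ} (hε : 0 < ε) (x y : X) :
    ∃ c : List X, IsEChain ε c ∧ c.head? = some x ∧ c.getLast? = some y := by
  set S : Set X := {y | ∃ c : List X, IsEChain ε c ∧ c.head? = some x ∧ c.getLast? = some y}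
    with hS
  have extend : ∀ z w : X, z ∈ S → dist z w < ε → w ∈ S := by
    rintro z w ⟨c, hc, hh, hl⟩ hd
    refine ⟨c ++ [w], ⟨by simp, ?_⟩, ?_, ?_⟩
    · refine List.isChain_append.2 ⟨hc.2, List.isChain_singleton _, ?_⟩
      intro a ha b hb
      rw [hl] at ha
      simp only [Option.mem_def, Option.some.injEq] at ha
      simp only [List.head?_cons, Option.mem_def, Option.some.injEq] at hb
      subst ha; subst hb; exact hd
    · rw [List.head?_append_of_ne_nil _ hc.1]; exact hh
    · exact List.getLast?_concat
  have hopen : IsOpen S := by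
    rw [Metric.isOpen_iff]
    intro z hz
    exact ⟨ε, hε, fun w hw => extend z w hz (by rw [dist_comm]; exact mem_ball.1 hw)⟩
  have hclosed : IsClosed S := by
    rw [← isOpen_compl_iff, Metric.isOpen_iff]
    intro z hz
    refine ⟨ε, hε, fun w hw hwS => hz (extend w z hwS (mem_ball.1 hw))⟩
  have hx : x ∈ S := ⟨[x], ⟨List.cons_ne_nil _ _, List.isChain_singleton _⟩, rfl, rfl⟩
  have : S = Set.univ := IsClopen.eq_univ ⟨hclosed, hopen⟩ ⟨x, hx⟩
  have hy : y ∈ S := this ▸ Set.mem_univ y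
  exact hy

section Main
variable [ConnectedSpace X] {ε : ℝ}

lemma depsSet_nonempty [ConnectedSpace X] (hε : 0 < ε) (x y : X) :
    {r | ∃ c : List X, IsEChain ε c ∧ c.head? = some x ∧ c.getLast? = some y ∧
      chainLength c = r}.Nonempty := by
  obtain ⟨c, hc, hh, hl⟩ := chain_connected hε x y
  exact ⟨chainLength c, c, hc, hh, hl, rfl⟩

lemma depsSet_bdd (ε : ℝ) (x y : X) :
    BddBelow {r | ∃ c : List X, IsEChain ε c ∧ c.head? = some x ∧ c.getLast? = some y ∧
      chainLength c = r} :=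
  ⟨0, by rintro r ⟨c, _, _, _, rfl⟩; exact chainLength_nonneg c⟩

lemma Deps_le_chainLength {c : List X} {x y : X} (hc : IsEChain ε c)
    (hh : c.head? = some x) (hl : c.getLast? = some y) : Deps ε x y ≤ chainLength c :=
  csInf_le (depsSet_bdd ε x y) ⟨c, hc, hh, hl, rfl⟩

lemma dist_le_Deps (hε : 0 < ε) (x y : X) : dist x y ≤ Deps ε x y := by
  apply le_csInf (depsSet_nonempty hε x y)
  rintro r ⟨c, hc, hh, hl, rfl⟩
  exact dist_le_chainLength c x y hh hl

theorem Deps_is_metric' (hε : 0 < ε) :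
    (∀ x : X, Deps ε x x = 0) ∧
    (∀ x y : X, Deps ε x y = Deps ε y x) ∧
    (∀ x y z : X, Deps ε x z ≤ Deps ε x y + Deps ε y z) ∧
    (∀ x y : X, Deps ε x y = 0 → x = y) ∧
    (∀ x y : X, dist x y ≤ Deps ε x y) ∧
    (∀ x y : X, Deps ε x y < ε ↔ dist x y < ε) ∧
    (∀ x y : X, dist x y < ε → Deps ε x y = dist x y) := by
  have deps_le_dist : ∀ x y : X, dist x y < ε → Deps ε x y ≤ dist x y := by
    intro x y h
    have : Deps ε x y ≤ chainLength [x, y] :=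
      Deps_le_chainLength ⟨List.cons_ne_nil _ _, List.isChain_pair.2 h⟩ rfl rfl
    simpa [chainLength] using this
  have refl0 : ∀ x : X, Deps ε x x = 0 := by
    intro x
    refine le_antisymm ?_ ?_
    · have h := deps_le_dist x x (by simpa using hε)
      simpa using h
    · have := dist_le_Deps hε x x
      simpa using this
  have symm_le : ∀ x y : X, Deps ε x y ≤ Deps ε y x := by
    intro x y
    apply le_csInf (depsSet_nonempty hε y x)
    rintro r ⟨c, hc, hh, hl, rfl⟩
    rw [← chainLength_reverse c]
    exact Deps_le_chainLength hc.reverse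
      (by rwa [List.head?_reverse]) (by rwa [List.getLast?_reverse])
  have tri : ∀ x y z : X, Deps ε x z ≤ Deps ε x y + Deps ε y z := by
    intro x y z
    have h1 : Deps ε x z - Deps ε y z ≤ Deps ε x y := by
      apply le_csInf (depsSet_nonempty hε x y)
      rintro b ⟨c₁, hc₁, hh₁, hl₁, rfl⟩
      have h2 : Deps ε x z - chainLength c₁ ≤ Deps ε y z := by
        apply le_csInf (depsSet_nonempty hε y z)
        rintro b' ⟨c₂, hc₂, hh₂, hl₂, rfl⟩
        have hchain : IsEChain ε (c₁ ++ c₂) := by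
          refine ⟨by simp [hc₁.1], List.isChain_append.2 ⟨hc₁.2, hc₂.2, ?_⟩⟩
          intro a ha b hb
          rw [hl₁] at ha; rw [hh₂] at hb
          simp only [Option.mem_def, Option.some.injEq] at ha hb
          subst ha; subst hb
          simpa using hε
        have key : Deps ε x z ≤ chainLength (c₁ ++ c₂) :=
          Deps_le_chainLength hchain
            (by rw [List.head?_append_of_ne_nil _ hc₁.1]; exact hh₁)
            (by rw [List.getLast?_append_of_ne_nil _ hc₂.1]; exact hl₂)
        rw [chainLength_append c₁ c₂ y y hl₁ hh₂] at key
        simp only [dist_self, add_zero] at key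
        linarith
      linarith
    linarith
  refine ⟨refl0, fun x y => le_antisymm (symm_le x y) (symm_le y x), tri, ?_, dist_le_Deps hε, ?_, ?_⟩
  · intro x y h
    have h1 := dist_le_Deps hε x y
    rw [h] at h1
    exact eq_of_dist_eq_zero (le_antisymm h1 dist_nonneg)
  · intro x y
    constructor
    · intro h
      obtain ⟨r, ⟨c, hc, hh, hl, rfl⟩, hrε⟩ := exists_lt_of_csInf_lt (depsSet_nonempty hε x y) h
      exact lt_of_le_of_lt (dist_le_chainLength c x y hh hl) hrε
    · intro h
      exact lt_of_le_of_lt (deps_le_dist x y h) h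
  · intro x y h
    exact le_antisymm (deps_le_dist x y h) (dist_le_Deps hε x y)

end Main

theorem Deps_is_metric (X : Type*) [MetricSpace X] [ConnectedSpace X]
    {ε : ℝ} (hε : 0 < ε) :
    (∀ x : X, Deps ε x x = 0) ∧
    (∀ x y : X, Deps ε x y = Deps ε y x) ∧
    (∀ x y z : X, Deps ε x z ≤ Deps ε x y + Deps ε y z) ∧
    (∀ x y : X, Deps ε x y = 0 → x = y) ∧
    (∀ x y : X, dist x y ≤ Deps ε x y) ∧
    (∀ x y : X, Deps ε x y < ε ↔ dist x y < ε) ∧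
    (∀ x y : X, dist x y < ε → Deps ε x y = dist x y) :=
  Deps_is_metric' hε
end

section
/- Let {x,y} be an essential ε-gap in a metric space X with d(x,y) = ε. Then for all δ greater than but sufficiently close to ε, the balls B(x,δ) and B(y,δ) are not ε-connected (in particular, not connected): there is no ε-chain from x to y lying entirely within B(x,δ), and none lying entirely within B(y,δ). -/
open Metric

variable {X : Type*} [MetricSpace X]

/-- `{x,y}` is an essential -gap. -/
def EssentialEGap (ε : ℝ) (x y : X) : Prop :=
  dist x y = ε ∧ ∃ τ > ε, ∀ δ : ℝ, ε < δ → δ < τ →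
    ¬ ∃ c : List X, IsEChain ε c ∧ EHomotopic δ [x, y] c


lemma estep_symm {δ : ℝ} {c₁ c₂ : List X} (h : EStep δ c₁ c₂) : EStep δ c₂ c₁ := by
  obtain ⟨h₁, h₂, pre, post, a, hpre, hpost, hcase⟩ := h
  rcases hcase with ⟨e₁, e₂⟩ | ⟨e₁, e₂⟩
  · exact ⟨h₂, h₁, pre, post, a, hpre, hpost, Or.inr ⟨e₂, e₁⟩⟩
  · exact ⟨h₂, h₁, pre, post, a, hpre, hpost, Or.inl ⟨e₂, e₁⟩⟩

lemma ehomotopic_symm {δ : ℝ} {c₁ c₂ : List X} (h : EHomotopic δ c₁ c₂) :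
    EHomotopic δ c₂ c₁ :=
  (@Relation.ReflTransGen.stdSymm _ _ ⟨fun _ _ => estep_symm⟩).symm _ _ h

lemma isEChain_reverse {δ : ℝ} {c : List X} (h : IsEChain δ c) : IsEChain δ c.reverse := by
  refine ⟨by simpa using h.1, ?_⟩
  show List.IsChain _ _
  rw [List.isChain_reverse]
  exact h.2.imp (fun a b hab => by simpa only [flip, dist_comm] using hab)

lemma estep_reverse {δ : ℝ} {c₁ c₂ : List X} (h : EStep δ c₁ c₂) :
    EStep δ c₁.reverse c₂.reverse := by
  obtain ⟨h₁, h₂, pre, post, a, hpre, hpost, hcase⟩ := h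
  refine ⟨isEChain_reverse h₁, isEChain_reverse h₂, post.reverse, pre.reverse, a,
    by simpa using hpost, by simpa using hpre, ?_⟩
  rcases hcase with ⟨e₁, e₂⟩ | ⟨e₁, e₂⟩
  · left
    constructor
    · rw [e₁, List.reverse_append]
    · rw [e₂]; simp
  · right
    constructor
    · rw [e₁]; simp
    · rw [e₂, List.reverse_append]

lemma ehomotopic_reverse {δ : ℝ} {c₁ c₂ : List X} (h : EHomotopic δ c₁ c₂) :
    EHomotopic δ c₁.reverse c₂.reverse :=
  Relation.ReflTransGen.lift _ (fun _ _ => estep_reverse) _ _ h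

/-- Key: a δ-chain from x to b all of whose points are within δ of x can be
δ-homotoped to [x, b] by removing the point after x repeatedly. -/
lemma homotope_ball {δ : ℝ} (x : X) :
    ∀ (l : List X) (b : X), List.Chain' (fun a b => dist a b < δ) (x :: l ++ [b]) →
    (∀ z ∈ l ++ [b], dist x z < δ) →
    EHomotopic δ (x :: l ++ [b]) [x, b] := by
  intro l
  induction l with
  | nil => intro b _ _; exact Relation.ReflTransGen.refl
  | cons a l ih =>
    intro b hchain hball
    have hxb : dist x b < δ := hball b (by simp)
    have hchain' : List.Chain' (fun a b => dist a b < δ) (x :: l ++ [b]) := by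
      rcases List.isChain_cons_cons.mp hchain with ⟨_, htail⟩
      have htail' := (List.isChain_cons.mp htail).2
      refine List.isChain_cons.mpr ⟨?_, htail'⟩
      intro z hz
      cases l with
      | nil => simp at hz; subst hz; exact hxb
      | cons w l' =>
        simp at hz; subst hz
        exact hball w (by simp)
    have hstep : EStep δ (x :: (a :: l) ++ [b]) (x :: l ++ [b]) := by
      refine ⟨⟨by simp, hchain⟩, ⟨by simp, hchain'⟩, [x], l ++ [b], a,
        by simp, by simp, Or.inr ⟨by simp, by simp⟩⟩
    exact Relation.ReflTransGen.head hstep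
      (ih b hchain' (fun z hz => hball z (List.mem_cons_of_mem a hz)))

theorem essential_gap_balls_disconnected {ε : ℝ} (hε : 0 < ε) {x y : X}
    (h : EssentialEGap ε x y) :
    ∃ τ > ε, ∀ δ : ℝ, ε < δ → δ < τ →
      (¬ ∃ c : List X, IsEChain ε c ∧ c.head? = some x ∧ c.getLast? = some y ∧
        ∀ z ∈ c, z ∈ ball x δ) ∧
      (¬ ∃ c : List X, IsEChain ε c ∧ c.head? = some x ∧ c.getLast? = some y ∧
        ∀ z ∈ c, z ∈ ball y δ)  := by
  obtain ⟨hdist, τ, hτ, hgap⟩ := h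
  refine ⟨τ, hτ, fun δ hδ hδτ => ?_⟩
  have hxy : x ≠ y := by
    intro e; rw [e, dist_self] at hdist; exact absurd hdist.symm (ne_of_gt hε)
  -- decompose any such chain as x :: l ++ [y]
  have decomp : ∀ c : List X, IsEChain ε c → c.head? = some x → c.getLast? = some y →
      ∃ l : List X, c = x :: l ++ [y] := by
    intro c hc hh hl
    obtain ⟨hne, _⟩ := hc
    cases c with
    | nil => exact absurd rfl hne
    | cons u t =>
      have hu : u = x := by simpa using hh
      cases t with
      | nil =>
        exfalso; apply hxy
        have huy : u = y := by simpa using hl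
        rw [← hu, huy]
      | cons v t' =>
        have ht : v :: t' ≠ [] := by simp
        have hlast : (v :: t').getLast ht = y := by
          rw [List.getLast?_cons_cons, List.getLast?_eq_getLast ht] at hl
          simpa using hl
        refine ⟨(v :: t').dropLast, ?_⟩
        rw [hu, ← hlast]
        simp [List.dropLast_append_getLast ht]
  have chain_mono : ∀ c : List X, IsEChain ε c →
      List.Chain' (fun a b => dist a b < δ) c := by
    intro c hc
    exact hc.2.imp (fun a b hab => lt_trans hab hδ)
  constructor
  · rintro ⟨c, hc, hh, hl, hball⟩
    obtain ⟨l, hcl⟩ := decomp c hc hh hl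
    apply hgap δ hδ hδτ
    refine ⟨c, hc, ehomotopic_symm ?_⟩
    rw [hcl]
    rw [hcl] at hc hball
    apply homotope_ball x l y (chain_mono _ hc)
    intro z hz
    have := hball z (List.mem_cons_of_mem x hz)
    simpa [dist_comm] using this
  · rintro ⟨c, hc, hh, hl, hball⟩
    obtain ⟨l, hcl⟩ := decomp c hc hh hl
    apply hgap δ hδ hδτ
    refine ⟨c, hc, ehomotopic_symm ?_⟩
    rw [hcl]
    rw [hcl] at hc hball
    have hrev : (x :: l ++ [y]).reverse = y :: l.reverse ++ [x] := by simp
    have h1 : EHomotopic δ (y :: l.reverse ++ [x]) [y, x] := by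
      apply homotope_ball y l.reverse x
      · rw [← hrev]; show List.IsChain _ _; rw [List.isChain_reverse]
        exact (chain_mono _ hc).imp
          (fun a b hab => by simpa only [flip, dist_comm] using hab)
      · intro z hz
        rw [List.mem_append] at hz
        rcases hz with hz | hz
        · have := hball z (List.mem_cons_of_mem x
            (List.mem_append_left [y] (List.mem_reverse.mp hz)))
          simpa [dist_comm] using this
        · rw [List.mem_singleton] at hz
          rw [hz]
          have := hball x (List.mem_cons_self (a := x))
          simpa [dist_comm] using this
    rw [← hrev] at h1
    have h2 := ehomotopic_reverse h1
    simpa using h2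
end

section
/- If {x,y} is an essential gap in a metric space X, then dist(B(x,r), B(y,r)) = d(x,y) for all sufficiently small r > 0. -/
open Metric

variable {X : Type*} [MetricSpace X]

/-- `{x,y}` is an essential gap (with `l = d(x,y)`). -/
def EssentialGap (x y : X) : Prop :=
  0 < dist x y ∧ ∃ τ > dist x y, ∀ ε : ℝ, dist x y < ε → ε < τ →
    ¬ ∃ c : List X, IsEChain (dist x y) c ∧ EHomotopic ε [x, y] c

theorem essential_gap_ball_dist {x y : X} (h : EssentialGap x y) :
    ∃ r₀ > 0, ∀ r : ℝ, 0 < r → r < r₀ →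
      sInf (Set.image2 dist (ball x r) (ball y r)) = dist x y := by
  obtain ⟨hl, τ, hτ, hgap⟩ := h
  set l := dist x y with hldef
  refine ⟨min l (τ - l), lt_min hl (by linarith), fun r hr hrlt => ?_⟩
  have hrl : r < l := hrlt.trans_le (min_le_left _ _)
  have hrτ : r < τ - l := hrlt.trans_le (min_le_right _ _)
  have key : ∀ u ∈ ball x r, ∀ v ∈ ball y r, l ≤ dist u v := by
    intro u hu v hv
    by_contra hlt
    push_neg at hlt
    rw [mem_ball, dist_comm] at hu hv
    have hvy : dist v y < r := by rw [dist_comm]; exact hv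
    apply hgap (l + r) (by linarith) (by linarith)
    have hε : l < l + r := by linarith
    have hxu : dist x u < l + r := by linarith
    have huy : dist u y < l + r :=
      (dist_triangle u v y).trans_lt (by linarith)
    have hvy' : dist v y < l + r := by linarith
    have huv : dist u v < l + r := by linarith
    have cxy : IsEChain (l + r) [x, y] := ⟨by simp, by simpa [List.Chain', ← hldef] using hε⟩
    have cxuy : IsEChain (l + r) [x, u, y] := by
      refine ⟨by simp, ?_⟩
      simp only [List.Chain', List.isChain_cons_cons, List.isChain_singleton, and_true]
      exact ⟨hxu, huy⟩
    have cxuvy : IsEChain (l + r) [x, u, v, y] := by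
      refine ⟨by simp, ?_⟩
      simp only [List.Chain', List.isChain_cons_cons, List.isChain_singleton, and_true]
      exact ⟨hxu, huv, hvy'⟩
    have cl : IsEChain l [x, u, v, y] := by
      refine ⟨by simp, ?_⟩
      simp only [List.Chain', List.isChain_cons_cons, List.isChain_singleton, and_true]
      exact ⟨by linarith, hlt, by linarith⟩
    refine ⟨[x, u, v, y], cl, ?_⟩
    have s1 : EStep (l + r) [x, y] [x, u, y] :=
      ⟨cxy, cxuy, [x], [y], u, by simp, by simp, Or.inl ⟨rfl, rfl⟩⟩
    have s2 : EStep (l + r) [x, u, y] [x, u, v, y] :=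
      ⟨cxuy, cxuvy, [x, u], [y], v, by simp, by simp, Or.inl ⟨rfl, rfl⟩⟩
    exact Relation.ReflTransGen.tail (Relation.ReflTransGen.single s1) s2
  have hmem : l ∈ Set.image2 dist (ball x r) (ball y r) :=
    ⟨x, mem_ball_self hr, y, mem_ball_self hr, rfl⟩
  have hlb : ∀ z ∈ Set.image2 dist (ball x r) (ball y r), l ≤ z := by
    rintro z ⟨u, hu, v, hv, rfl⟩
    exact key u hu v hv
  exact le_antisymm (csInf_le ⟨l, hlb⟩ hmem) (le_csInf ⟨l, hmem⟩ hlb)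
end

section
/- Let {x,y} be a pre-essential gap with l = d(x,y) and witness ε* > l, and fix ε with l < ε ≤ ε*. Then the gap number 𝒢(γ; x, y, ε) of an ε-chain γ is invariant under ε-homotopy: if α and γ are ε-homotopic ε-chains, then 𝒢(γ; x,y,ε) = 𝒢(α; x,y,ε). -/
open Metric

variable {X : Type*} [MetricSpace X]

/-- `{x,y}` is a pre-essential gap with witness `εstar`. -/
def PreEssentialGap (x y : X) (εstar : ℝ) : Prop :=
  0 < dist x y ∧ dist x y < εstar ∧
  ∀ ε : ℝ, dist x y < ε → ε ≤ εstar →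
    ∃ Z : Set X, ball x (ε - dist x y) ⊆ Z ∧ ball y (ε - dist x y) ⊆ Zᶜ ∧
      (∀ z ∈ Z, (∃ w ∈ ball y (ε - dist x y), dist z w < ε) →
        z ∈ ball x (ε - dist x y)) ∧
      (∀ z ∈ Zᶜ, (∃ w ∈ ball x (ε - dist x y), dist z w < ε) →
        z ∈ ball y (ε - dist x y))

open Classical in
/-- The signed crossing value of a consecutive pair. -/
noncomputable def pairVal (Bx By : Set X) (a b : X) : ℤ :=
  if a ∈ Bx ∧ b ∈ By then 1 else if a ∈ By ∧ b ∈ Bx then -1 else 0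

/-- The gap number of a chain: the net signed number of crossings of the gap. -/
noncomputable def gapNumber (Bx By : Set X) : List X → ℤ
  | [] => 0
  | [_] => 0
  | a :: b :: rest => pairVal Bx By a b + gapNumber Bx By (b :: rest)

lemma pairVal_split {Bx By Z : Set X} {ε : ℝ}
    (hBxZ : Bx ⊆ Z) (hByZ : By ⊆ Zᶜ)
    (hZ1 : ∀ z ∈ Z, (∃ w ∈ By, dist z w < ε) → z ∈ Bx)
    (hZ2 : ∀ z ∈ Zᶜ, (∃ w ∈ Bx, dist z w < ε) → z ∈ By)
    {u a v : X} (hua : dist u a < ε) (hav : dist a v < ε) (huv : dist u v < ε) :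
    pairVal Bx By u a + pairVal Bx By a v = pairVal Bx By u v := by
  have hdisj : ∀ p : X, p ∈ Bx → p ∈ By → False := fun p h1 h2 => hByZ h2 (hBxZ h1)
  by_cases haX : a ∈ Bx
  · have haY : a ∉ By := fun h => hdisj a haX h
    by_cases huY : u ∈ By
    · have huX : u ∉ Bx := fun h => hdisj u h huY
      by_cases hvY : v ∈ By
      · have hvX : v ∉ Bx := fun h => hdisj v h hvY
        simp [pairVal, haX, haY, huY, huX, hvY, hvX]
      · have hvZ : v ∈ Z := by
          by_contra hv
          exact hvY (hZ2 v hv ⟨a, haX, by rw [dist_comm]; exact hav⟩)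
        have hvX : v ∈ Bx := hZ1 v hvZ ⟨u, huY, by rw [dist_comm]; exact huv⟩
        simp [pairVal, haX, haY, huY, huX, hvY, hvX]
    · by_cases hvY : v ∈ By
      · have huZ : u ∈ Z := by
          by_contra hu
          exact huY (hZ2 u hu ⟨a, haX, hua⟩)
        have huX : u ∈ Bx := hZ1 u huZ ⟨v, hvY, huv⟩
        simp [pairVal, haX, haY, huY, huX, hvY]
      · simp [pairVal, haX, haY, huY, hvY]
  · by_cases haY : a ∈ By
    · by_cases huX : u ∈ Bx
      · have huY : u ∉ By := fun h => hdisj u huX h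
        by_cases hvX : v ∈ Bx
        · have hvY : v ∉ By := fun h => hdisj v hvX h
          simp [pairVal, haX, haY, huX, huY, hvX, hvY]
        · have hvZc : v ∈ Zᶜ := by
            intro hv
            exact hvX (hZ1 v hv ⟨a, haY, by rw [dist_comm]; exact hav⟩)
          have hvY : v ∈ By := hZ2 v hvZc ⟨u, huX, by rw [dist_comm]; exact huv⟩
          simp [pairVal, haX, haY, huX, huY, hvX, hvY]
      · by_cases hvX : v ∈ Bx
        · have huZc : u ∈ Zᶜ := by
            intro hu
            exact huX (hZ1 u hu ⟨a, haY, hua⟩)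
          have huY : u ∈ By := hZ2 u huZc ⟨v, hvX, huv⟩
          simp [pairVal, haX, haY, huX, huY, hvX]
        · have h0 : ¬ (u ∈ Bx ∧ v ∈ By) := fun ⟨h, _⟩ => huX h
          have h0' : ¬ (u ∈ By ∧ v ∈ Bx) := fun ⟨_, h⟩ => hvX h
          simp [pairVal, haX, haY, huX, hvX, h0, h0']
    · have h0 : ¬ (u ∈ Bx ∧ v ∈ By) := by
        rintro ⟨huX, hvY⟩
        by_cases haZ : a ∈ Z
        · exact haX (hZ1 a haZ ⟨v, hvY, hav⟩)
        · exact haY (hZ2 a haZ ⟨u, huX, by rw [dist_comm]; exact hua⟩)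
      have h0' : ¬ (u ∈ By ∧ v ∈ Bx) := by
        rintro ⟨huY, hvX⟩
        by_cases haZ : a ∈ Z
        · exact haX (hZ1 a haZ ⟨u, huY, by rw [dist_comm]; exact hua⟩)
        · exact haY (hZ2 a haZ ⟨v, hvX, hav⟩)
      simp [pairVal, haX, haY, h0, h0']

lemma gapNumber_append_congr (Bx By : Set X) (p : List X) {l₁ l₂ : List X} {h : X}
    (h1 : l₁.head? = some h) (h2 : l₂.head? = some h)
    (heq : gapNumber Bx By l₁ = gapNumber Bx By l₂) :
    gapNumber Bx By (p ++ l₁) = gapNumber Bx By (p ++ l₂) := by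
  induction p with
  | nil => simpa using heq
  | cons w p ih =>
    cases p with
    | nil =>
      cases l₁ with
      | nil => simp at h1
      | cons a t₁ =>
        cases l₂ with
        | nil => simp at h2
        | cons b t₂ =>
          simp only [List.head?_cons, Option.some.injEq] at h1 h2
          subst h1; subst h2
          simp only [List.nil_append, List.cons_append, gapNumber] at heq ⊢
          omega
    | cons w' p' =>
      simp only [List.cons_append, List.append_eq, gapNumber] at ih ⊢
      omega

lemma gapNumber_insert (Bx By : Set X) (p : List X) (u a v : X) (q : List X)
    (hval : pairVal Bx By u a + pairVal Bx By a v = pairVal Bx By u v) :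
    gapNumber Bx By (p ++ u :: a :: v :: q) = gapNumber Bx By (p ++ u :: v :: q) := by
  refine gapNumber_append_congr Bx By p (l₁ := u :: a :: v :: q) (l₂ := u :: v :: q)
    (h := u) rfl rfl ?_
  simp only [gapNumber]
  omega

theorem gapNumber_homotopy_invariant {x y : X} {εstar ε : ℝ}
    (hpre : PreEssentialGap x y εstar) (h1 : dist x y < ε) (h2 : ε ≤ εstar)
    {α γ : List X} (h : EHomotopic ε α γ) :
    gapNumber (ball x (ε - dist x y)) (ball y (ε - dist x y)) γ =
      gapNumber (ball x (ε - dist x y)) (ball y (ε - dist x y)) α := by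
  obtain ⟨Z, hBxZ, hByZ, hZ1, hZ2⟩ := hpre.2.2 ε h1 h2
  set Bx := ball x (ε - dist x y) with hBx
  set By := ball y (ε - dist x y) with hBy
  have step : ∀ c₁ c₂ : List X, EStep ε c₁ c₂ →
      gapNumber Bx By c₂ = gapNumber Bx By c₁ := by
    rintro c₁ c₂ ⟨⟨_, hc₁⟩, ⟨_, hc₂⟩, pre, post, a, hpre', hpost, hcase⟩
    obtain ⟨p, u, rfl⟩ := pre.eq_nil_or_concat.resolve_left hpre'
    obtain ⟨v, q, rfl⟩ := List.exists_cons_of_ne_nil hpost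
    rcases hcase with ⟨rfl, rfl⟩ | ⟨rfl, rfl⟩
    · simp only [List.concat_eq_append, List.append_assoc, List.singleton_append] at hc₁ hc₂ ⊢
      have hsuf₂ : (u :: a :: v :: q).Chain' (fun a b => dist a b < ε) :=
        hc₂.suffix ⟨p, rfl⟩
      have hsuf₁ : (u :: v :: q).Chain' (fun a b => dist a b < ε) :=
        hc₁.suffix ⟨p, rfl⟩
      obtain ⟨hua, hsuf₂⟩ := List.isChain_cons_cons.mp hsuf₂
      obtain ⟨hav, -⟩ := List.isChain_cons_cons.mp hsuf₂
      obtain ⟨huv, -⟩ := List.isChain_cons_cons.mp hsuf₁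
      exact gapNumber_insert Bx By p u a v q
        (pairVal_split hBxZ hByZ hZ1 hZ2 hua hav huv)
    · simp only [List.concat_eq_append, List.append_assoc, List.singleton_append] at hc₁ hc₂ ⊢
      have hsuf₁ : (u :: a :: v :: q).Chain' (fun a b => dist a b < ε) :=
        hc₁.suffix ⟨p, rfl⟩
      have hsuf₂ : (u :: v :: q).Chain' (fun a b => dist a b < ε) :=
        hc₂.suffix ⟨p, rfl⟩
      obtain ⟨hua, hsuf₁⟩ := List.isChain_cons_cons.mp hsuf₁
      obtain ⟨hav, -⟩ := List.isChain_cons_cons.mp hsuf₁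
      obtain ⟨huv, -⟩ := List.isChain_cons_cons.mp hsuf₂
      exact (gapNumber_insert Bx By p u a v q
        (pairVal_split hBxZ hByZ hZ1 hZ2 hua hav huv)).symm
  induction h with
  | refl => rfl
  | tail _ hstep ih => exact (step _ _ hstep).trans ih
end

section
/- Let {x,y} be a pre-essential gap in a chain connected metric space X with l = d(x,y), and suppose dist(B(x,r), B(y,r)) = d(x,y) for all sufficiently small r > 0. Then {x,y} is an essential l-gap: for every ε greater than but sufficiently close to l, the ε-chain {x,y} is not ε-homotopic to an l-chain. -/
open Metric

variable {X : Type*} [MetricSpace X]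

/-- Gap-number of a chain relative to an abstract crossing weight `g`. -/
def gapG (g : X → X → ℤ) : List X → ℤ
  | a :: b :: rest => g a b + gapG g (b :: rest)
  | _ => 0

lemma gapG_insert (g : X → X → ℤ) (ε : ℝ)
    (hadd : ∀ u a v : X, dist u v < ε → dist u a < ε → dist a v < ε →
      g u a + g a v = g u v) :
    ∀ (pre post : List X) (a : X), pre ≠ [] → post ≠ [] →
      (pre ++ post).Chain' (fun a b => dist a b < ε) →
      (pre ++ a :: post).Chain' (fun a b => dist a b < ε) →
      gapG g (pre ++ post) = gapG g (pre ++ a :: post) := by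
  intro pre
  induction pre with
  | nil => intro post a h; exact absurd rfl h
  | cons u pre' ih =>
    intro post a _ hpost h1 h2
    cases pre' with
    | nil =>
      cases post with
      | nil => exact absurd rfl hpost
      | cons v post' =>
        simp only [List.Chain', List.nil_append, List.cons_append, List.isChain_cons_cons] at h1 h2 ⊢
        obtain ⟨duv, _⟩ := h1
        obtain ⟨dua, dav, _⟩ := h2
        simp only [gapG]
        rw [← hadd u a v duv dua dav]
        ring
    | cons w pre'' =>
      have h1' : ((w :: pre'') ++ post).Chain' (fun a b => dist a b < ε) := by
        exact h1.tail
      have h2' : ((w :: pre'') ++ a :: post).Chain' (fun a b => dist a b < ε) := by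
        exact h2.tail
      have := ih post a (by simp) hpost h1' h2'
      simp only [List.cons_append, gapG, List.append_eq] at this ⊢
      rw [this]

lemma gapG_zero (g : X → X → ℤ) (l : ℝ)
    (h0 : ∀ p q : X, dist p q < l → g p q = 0) :
    ∀ c : List X, c.Chain' (fun a b => dist a b < l) → gapG g c = 0 := by
  intro c
  induction c with
  | nil => intro _; rfl
  | cons a c ih =>
    intro hc
    cases c with
    | nil => rfl
    | cons b rest =>
      simp only [List.Chain', List.isChain_cons_cons] at hc
      simp only [gapG, h0 a b hc.1, ih hc.2, add_zero]


open Classical in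
/-- crossing weight for the gap-number argument -/
noncomputable def gapg (Bx By : Set X) (p q : X) : ℤ :=
  (if p ∈ Bx ∧ q ∈ By then 1 else 0) - (if p ∈ By ∧ q ∈ Bx then 1 else 0)

theorem essential_gap_lemma (X : Type*) [MetricSpace X] (hcc : ChainConnected X)
    {x y : X} {εstar : ℝ} (hpre : PreEssentialGap x y εstar)
    (hdist : ∃ r₀ > 0, ∀ r : ℝ, 0 < r → r < r₀ →
      sInf (Set.image2 dist (ball x r) (ball y r)) = dist x y) :
    ∃ τ > dist x y, ∀ ε : ℝ, dist x y < ε → ε < τ →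
      ¬ ∃ c : List X, IsEChain (dist x y) c ∧ EHomotopic ε [x, y] c := by
  classical
  obtain ⟨hlpos, hlstar, hpart⟩ := hpre
  obtain ⟨r₀, hr₀, hd⟩ := hdist
  refine ⟨min εstar (dist x y + r₀), lt_min hlstar (by linarith), ?_⟩
  intro ε hlε hετ
  rintro ⟨c, ⟨hcne, hcch⟩, hhom⟩
  have hεstar : ε ≤ εstar := le_of_lt (lt_of_lt_of_le hετ (min_le_left _ _))
  have hεr : ε - dist x y < r₀ := by
    have := lt_of_lt_of_le hετ (min_le_right _ _); linarith
  have hεl : 0 < ε - dist x y := by linarith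
  obtain ⟨Z, hBxZ, hByZ, hF1, hF2⟩ := hpart ε hlε hεstar
  set Bx := ball x (ε - dist x y) with hBx
  set By := ball y (ε - dist x y) with hBy
  set g := gapg (X := X) Bx By with hg
  -- basic consequences of the partition
  have k1 : ∀ p q : X, dist p q < ε → p ∈ Z → q ∈ By → p ∈ Bx :=
    fun p q hpq hp hq => hF1 p hp ⟨q, hq, hpq⟩
  have k2 : ∀ p q : X, dist p q < ε → p ∈ Bx → q ∉ Z → q ∈ By :=
    fun p q hpq hp hq => hF2 q hq ⟨p, hp, by rwa [dist_comm]⟩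
  -- values of g
  have gsame : ∀ p q : X, (p ∈ Z ↔ q ∈ Z) → g p q = 0 := by
    intro p q hiff
    have h1 : ¬(p ∈ Bx ∧ q ∈ By) := fun ⟨hp, hq⟩ => (hByZ hq) (hiff.1 (hBxZ hp))
    have h2 : ¬(p ∈ By ∧ q ∈ Bx) := fun ⟨hp, hq⟩ => (hByZ hp) (hiff.2 (hBxZ hq))
    simp [hg, gapg, h1, h2]
  have gcross1 : ∀ p q : X, dist p q < ε → p ∈ Z → q ∉ Z →
      g p q = if p ∈ Bx then 1 else 0 := by
    intro p q hpq hp hq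
    have h2 : ¬(p ∈ By ∧ q ∈ Bx) := fun ⟨hp', _⟩ => (hByZ hp') hp
    have h1 : (p ∈ Bx ∧ q ∈ By) ↔ p ∈ Bx :=
      ⟨And.left, fun h => ⟨h, k2 p q hpq h hq⟩⟩
    simp only [hg, gapg, if_neg h2, sub_zero]
    exact if_congr h1 rfl rfl
  have gcross2 : ∀ p q : X, dist p q < ε → p ∉ Z → q ∈ Z →
      g p q = -(if p ∈ By then 1 else 0) := by
    intro p q hpq hp hq
    have h1 : ¬(p ∈ Bx ∧ q ∈ By) := fun ⟨hp', _⟩ => hp (hBxZ hp')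
    have h2 : (p ∈ By ∧ q ∈ Bx) ↔ p ∈ By :=
      ⟨And.left, fun h => ⟨h, k1 q p (by rwa [dist_comm]) hq h⟩⟩
    simp only [hg, gapg, if_neg h1, zero_sub]
    exact neg_inj.2 (if_congr h2 rfl rfl)
  -- additivity of g under insertion
  have hadd : ∀ u a v : X, dist u v < ε → dist u a < ε → dist a v < ε →
      g u a + g a v = g u v := by
    intro u a v duv dua dav
    have dau : dist a u < ε := by rwa [dist_comm] at dua
    have dva : dist v a < ε := by rwa [dist_comm] at dav
    have dvu : dist v u < ε := by rwa [dist_comm] at duv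
    by_cases hu : u ∈ Z <;> by_cases ha : a ∈ Z <;> by_cases hv : v ∈ Z
    · rw [gsame u a (iff_of_true hu ha), gsame a v (iff_of_true ha hv),
        gsame u v (iff_of_true hu hv)]; ring
    · -- u,a ∈ Z, v ∉ Z
      have hiff : a ∈ Bx ↔ u ∈ Bx :=
        ⟨fun h => k1 u v duv hu (k2 a v dav h hv),
         fun h => k1 a v dav ha (k2 u v duv h hv)⟩
      rw [gsame u a (iff_of_true hu ha), gcross1 a v dav ha hv,
        gcross1 u v duv hu hv, if_congr hiff rfl rfl]; ring
    · -- u ∈ Z, a ∉ Z, v ∈ Z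
      have hiff : a ∈ By ↔ u ∈ Bx :=
        ⟨fun h => k1 u a dua hu h, fun h => k2 u a dua h ha⟩
      rw [gcross1 u a dua hu ha, gcross2 a v dav ha hv,
        gsame u v (iff_of_true hu hv), if_congr hiff rfl rfl]; ring
    · -- u ∈ Z, a ∉ Z, v ∉ Z
      rw [gcross1 u a dua hu ha, gsame a v (iff_of_false ha hv),
        gcross1 u v duv hu hv]; ring
    · -- u ∉ Z, a ∈ Z, v ∈ Z
      rw [gcross2 u a dua hu ha, gsame a v (iff_of_true ha hv),
        gcross2 u v duv hu hv]; ring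
    · -- u ∉ Z, a ∈ Z, v ∉ Z
      have hiff : a ∈ Bx ↔ u ∈ By :=
        ⟨fun h => k2 a u dau h hu, fun h => k1 a u dau ha h⟩
      rw [gcross2 u a dua hu ha, gcross1 a v dav ha hv,
        gsame u v (iff_of_false hu hv), if_congr hiff rfl rfl]; ring
    · -- u ∉ Z, a ∉ Z, v ∈ Z
      have hiff : a ∈ By ↔ u ∈ By :=
        ⟨fun h => k2 v u dvu (k1 v a dva hv h) hu,
         fun h => k2 v a dva (k1 v u dvu hv h) ha⟩
      rw [gsame u a (iff_of_false hu ha), gcross2 a v dav ha hv,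
        gcross2 u v duv hu hv, if_congr hiff rfl rfl]; ring
    · rw [gsame u a (iff_of_false hu ha), gsame a v (iff_of_false ha hv),
        gsame u v (iff_of_false hu hv)]; ring
  -- g vanishes on pairs closer than dist x y
  have hsInf : sInf (Set.image2 dist Bx By) = dist x y := hd (ε - dist x y) hεl hεr
  have hfar : ∀ p q : X, p ∈ Bx → q ∈ By → dist x y ≤ dist p q := by
    intro p q hp hq
    have hmem : dist p q ∈ Set.image2 dist Bx By := Set.mem_image2_of_mem hp hq
    have hbdd : BddBelow (Set.image2 dist Bx By) := by
      refine ⟨0, ?_⟩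
      rintro r ⟨a, -, b, -, rfl⟩
      exact dist_nonneg
    calc dist x y = sInf (Set.image2 dist Bx By) := hsInf.symm
      _ ≤ dist p q := csInf_le hbdd hmem
  have hzero : ∀ p q : X, dist p q < dist x y → g p q = 0 := by
    intro p q hpq
    have h1 : ¬(p ∈ Bx ∧ q ∈ By) := fun ⟨hp, hq⟩ => absurd hpq (not_lt.2 (hfar p q hp hq))
    have h2 : ¬(p ∈ By ∧ q ∈ Bx) := fun ⟨hp, hq⟩ => by
      have := hfar q p hq hp
      rw [dist_comm q p] at this
      exact absurd hpq (not_lt.2 this)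
    simp [hg, gapg, h1, h2]
  -- gapG is invariant under ε-homotopy
  have hstep : ∀ c₁ c₂ : List X, EStep ε c₁ c₂ → gapG g c₁ = gapG g c₂ := by
    rintro c₁ c₂ ⟨⟨-, hch1⟩, ⟨-, hch2⟩, pre, post, a, hpre, hpost, hcase⟩
    rcases hcase with ⟨rfl, rfl⟩ | ⟨rfl, rfl⟩
    · exact gapG_insert g ε hadd pre post a hpre hpost hch1 hch2
    · exact (gapG_insert g ε hadd pre post a hpre hpost hch2 hch1).symm
  have hinv : gapG g [x, y] = gapG g c := by
    clear hcne hcch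
    induction hhom with
    | refl => rfl
    | tail _ hs ih => rw [ih]; exact hstep _ _ hs
  -- compute both sides
  have hxBx : x ∈ Bx := mem_ball_self hεl
  have hyBy : y ∈ By := mem_ball_self hεl
  have hgxy : g x y = 1 := by
    have h1 : x ∈ Bx ∧ y ∈ By := ⟨hxBx, hyBy⟩
    have h2 : ¬(x ∈ By ∧ y ∈ Bx) := fun ⟨hp, _⟩ => (hByZ hp) (hBxZ hxBx)
    simp [hg, gapg, h1, h2]
  have hleft : gapG g [x, y] = 1 := by simp [gapG, hgxy]
  have hright : gapG g c = 0 := gapG_zero g (dist x y) hzero c hcch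
  rw [hleft, hright] at hinv
  exact one_ne_zero hinv
end
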